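/- arXiv:2410.15024 — 2 statements merged into one kernel-verified Lean document; each statement's English description precedes it below -/
import Mathlib

section
/- Let n ≥ 6, let C = x_0, x_1, …, x_{n−1}, x_0 be a cycle of length n, let a, b, c be three pairwise distinct colors, and let i be an integer with 3 ≤ i ≤ n − 3. If the edges x_0x_1, x_1x_2, x_2x_3 are pre-colored a, b, c respectively and the edges x_ix_{i+1}, x_{i+1}x_{i+2}, x_{i+2}x_{i+3} are pre-colored a, c, b respectively, then this partial edge coloring can be extended to a 3-star edge coloring of C using only the colors {a, b, c}. -/
/-!
Encode `a, b, c` as `0, 1, 2 ∈ ZMod 3` and colour the edge `x_v x_{v+1}` by the height mod 3 of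
a zigzag path that climbs by one on `[0, p]`, descends on `[p, q]` and climbs again on `[q, n]`.
Consecutive colours then differ by `±1`, so the colouring is proper, and a four-edge path is
bicoloured only if three consecutive steps alternate in sign. That cannot happen as long as both
the climbing arc and the descending arc of the cycle have at least two edges. Choosing `p ≤ i`
and `q ≥ n - 2` in the right residue classes mod 3 makes the colours at `0, 1, 2` and at
`i, i + 1, i + 2` the prescribed ones and closes the path up around the cycle.
-/

/-- A 3-star edge coloring of the cycle `x_0, x_1, …, x_{n-1}, x_0`, where the edge
`x_i x_{i+1}` (indices mod `n`) receives color `g i`: the coloring is proper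
(adjacent edges get distinct colors) and no path or cycle with four edges is bicolored
(for a proper coloring this means no four consecutive edges are colored `a b a b`). -/
def IsStarEdgeColoringCycle {α : Type*} (n : ℕ) (g : ZMod n → α) : Prop :=
  (∀ i, g i ≠ g (i + 1)) ∧ ∀ i, ¬ (g i = g (i + 2) ∧ g (i + 1) = g (i + 3))

lemma ZMod.val_add_one_eq_ite {n : ℕ} [NeZero n] (x : ZMod n) :
    (x + 1).val = if x.val + 1 < n then x.val + 1 else 0 := by
  rw [show x + 1 = ((x.val + 1 : ℕ) : ZMod n) by simp, val_natCast]
  split_ifs with h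
  · exact Nat.mod_eq_of_lt h
  · rw [show x.val + 1 = n by have := x.val_lt; omega, Nat.mod_self]

lemma IsStarEdgeColoringCycle.comp {α β : Type*} {n : ℕ} {g : ZMod n → α}
    (hg : IsStarEdgeColoringCycle n g) {f : α → β} (hf : Function.Injective f) :
    IsStarEdgeColoringCycle n (f ∘ g) :=
  ⟨fun x h => hg.1 x (hf h), fun x h => hg.2 x ⟨hf h.1, hf h.2⟩⟩

lemma isStarEdgeColoringCycle_of_steps {n : ℕ} {w s : ZMod n → ZMod 3}
    (hw : ∀ x, w (x + 1) = w x + s x) (hs : ∀ x, s x ≠ 0)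
    (hrun : ∀ x, s x = s (x + 1) ∨ s (x + 1) = s (x + 2)) :
    IsStarEdgeColoringCycle n w := by
  have hw2 : ∀ x, w (x + 2) = w (x + 1) + s (x + 1) := fun x => by
    rw [← hw, add_assoc, one_add_one_eq_two]
  have hw3 : ∀ x, w (x + 3) = w (x + 2) + s (x + 2) := fun x => by
    rw [← hw, add_assoc]; norm_num
  -- A bicoloured window makes two consecutive steps cancel; if they were also equal, `2 t = 0`.
  have double_ne_zero : ∀ t : ZMod 3, t ≠ 0 → t + t ≠ 0 := by decide
  refine ⟨fun x h => hs x ?_, fun x ⟨h02, h13⟩ => ?_⟩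
  · rw [hw] at h; linear_combination -h
  · rw [hw2, hw] at h02
    rw [hw3, hw2] at h13
    rcases hrun x with h | h
    · exact double_ne_zero _ (hs x) (by linear_combination h - h02)
    · exact double_ne_zero _ (hs (x + 1)) (by linear_combination h - h13)

def zigzag (p q v : ℕ) : ℤ :=
  if v ≤ p then v else if v ≤ q then 2 * p - v else v + 2 * p - 2 * q

def zigzagStep (p q v : ℕ) : ℤ :=
  if p ≤ v ∧ v < q then -1 else 1

lemma zigzag_succ {p q : ℕ} (hpq : p ≤ q) (v : ℕ) :
    zigzag p q (v + 1) = zigzag p q v + zigzagStep p q v := by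
  unfold zigzag zigzagStep; split_ifs <;> omega

lemma zigzag_of_le {p q v : ℕ} (hpq : p ≤ q) (hqv : q ≤ v) :
    zigzag p q v = v + 2 * p - 2 * q := by
  unfold zigzag; split_ifs <;> omega

lemma zigzagStep_eq_or_eq {n p q : ℕ} [NeZero n] (hp : 2 ≤ p) (hpq : p + 2 ≤ q) (hqn : q ≤ n)
    (x : ZMod n) :
    zigzagStep p q x.val = zigzagStep p q (x + 1).val ∨
      zigzagStep p q (x + 1).val = zigzagStep p q (x + 2).val := by
  have := x.val_lt
  rw [show x + 2 = x + 1 + 1 by ring]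
  simp only [ZMod.val_add_one_eq_ite, zigzagStep]
  split_ifs <;> omega

def zigzagColoring (n p q : ℕ) (x : ZMod n) : ZMod 3 :=
  zigzag p q x.val

lemma zigzagColoring_add_one {n p q : ℕ} [NeZero n] (hpq : p ≤ q) (hqn : q ≤ n)
    (hper : (3 : ℤ) ∣ n + 2 * p - 2 * q) (x : ZMod n) :
    zigzagColoring n p q (x + 1) = zigzagColoring n p q x + zigzagStep p q x.val := by
  unfold zigzagColoring
  rw [← Int.cast_add, ← zigzag_succ hpq, ZMod.val_add_one_eq_ite]
  split_ifs
  · rfl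
  · rw [show x.val + 1 = n by have := x.val_lt; omega, zigzag_of_le hpq hqn,
      ZMod.intCast_eq_intCast_iff']
    simp only [zigzag, zero_le, if_true]
    omega

lemma zigzagColoring_natCast {n p q v : ℕ} (hv : v < n) {c : ℤ} (h : zigzag p q v % 3 = c % 3) :
    zigzagColoring n p q v = c := by
  rwa [zigzagColoring, ZMod.val_natCast_of_lt hv, ZMod.intCast_eq_intCast_iff']

lemma isStarEdgeColoringCycle_zigzagColoring {n p q : ℕ} [NeZero n]
    (hp : 2 ≤ p) (hpq : p + 2 ≤ q) (hqn : q ≤ n)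
    (hper : (3 : ℤ) ∣ n + 2 * p - 2 * q) :
    IsStarEdgeColoringCycle n (zigzagColoring n p q) := by
  refine isStarEdgeColoringCycle_of_steps (s := fun x => (zigzagStep p q x.val : ZMod 3))
    (zigzagColoring_add_one (by omega) hqn hper) (fun x => ?_) (fun x => ?_)
  · unfold zigzagStep; split_ifs <;> decide
  · rcases zigzagStep_eq_or_eq hp hpq hqn x with h | h
    · exact Or.inl (congrArg _ h)
    · exact Or.inr (congrArg _ h)

theorem stmt_3 {α : Type*} (n : ℕ) (hn : 6 ≤ n)
    (a b c : α) (hab : a ≠ b) (hac : a ≠ c) (hbc : b ≠ c)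
    (i : ℕ) (hi : 3 ≤ i) (hi' : i ≤ n - 3) :
    ∃ g : ZMod n → α, (∀ r, g r ∈ ({a, b, c} : Set α)) ∧
      IsStarEdgeColoringCycle n g ∧ g 0 = a ∧ g 1 = b ∧ g 2 = c ∧
      g (i : ZMod n) = a ∧ g ((i : ZMod n) + 1) = c ∧ g ((i : ZMod n) + 2) = b := by
  have : NeZero n := ⟨by omega⟩
  -- `2 * p ≡ i` makes the height at `i` vanish mod 3, and `2 * q ≡ n + 2 * p` closes the cycle.
  obtain ⟨p, hpi, hip, hp⟩ : ∃ p : ℕ, p ≤ i ∧ i ≤ p + 2 ∧ (3 : ℤ) ∣ 2 * p - i :=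
    ⟨i - 2 * i % 3, by omega, by omega, by omega⟩
  obtain ⟨q, hqn, hnq, hq⟩ : ∃ q : ℕ, q ≤ n ∧ n ≤ q + 2 ∧ (3 : ℤ) ∣ n + 2 * p - 2 * q :=
    ⟨n - (2 * p + 2 * n) % 3, by omega, by omega, by omega⟩
  have hstar := isStarEdgeColoringCycle_zigzagColoring (n := n) (p := p) (q := q)
    (by omega) (by omega) (by omega) (by omega)
  have hinj : Function.Injective (![a, b, c] : ZMod 3 → α) := by
    intro x y h
    fin_cases x <;> fin_cases y <;> simp_all [eq_comm]
  have hcolor : ∀ v : ℕ, v < n → ∀ k : ℤ, zigzag p q v % 3 = k % 3 →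
      (![a, b, c] ∘ zigzagColoring n p q) (v : ZMod n) = ![a, b, c] (k : ZMod 3) :=
    fun v hv k h => congrArg _ (zigzagColoring_natCast hv h)
  refine ⟨![a, b, c] ∘ zigzagColoring n p q, fun r => ?_, hstar.comp hinj,
    by simpa using hcolor 0 (by omega) 0 (by simp [zigzag]),
    by simpa using hcolor 1 (by omega) 1 (by unfold zigzag; split_ifs <;> omega),
    by simpa using hcolor 2 (by omega) 2 (by unfold zigzag; split_ifs <;> omega),
    by simpa using hcolor i (by omega) 0 (by unfold zigzag; split_ifs <;> omega),
    by simpa using hcolor (i + 1) (by omega) 2 (by unfold zigzag; split_ifs <;> omega),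
    by simpa using hcolor (i + 2) (by omega) 1 (by unfold zigzag; split_ifs <;> omega)⟩
  change ![a, b, c] (zigzagColoring n p q r) ∈ _
  generalize zigzagColoring n p q r = t
  fin_cases t <;> simp
end

section
/- For every integer k ≥ 2, the generalized Petersen graph GP(2k, k) has star chromatic index at most 5, i.e., χ'_s(GP(2k, k)) ≤ 5. -/
/-!
Colour the spokes `u_i v_i` with `3`, the inner edges `v_i v_{i+k}` (a perfect matching, as
`n = 2k`) with `4`, and the outer cycle `u_0 … u_{2k-1}` with `0, 1, 2` by a star colouring of the
cycle: the word `0102` repeated, with the last two edges recoloured `1, 2` when `2k ≡ 2 [MOD 4]`.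
Paths and cycles with four edges are trails, hence walks `x₀x₁x₂x₃x₄` with `xᵢ ≠ xᵢ₊₂`, and a
bicoloured one has alternating colours. In such a walk neither `x₁x₂` nor `x₂x₃` can be a spoke,
since a spoke's neighbouring edges are outer edges at one end and the inner edge at the other; as
the inner edges form a matching, `x₂` is then an outer vertex, and the colours force the whole
walk onto the outer cycle, where the cycle colouring rules it out.
-/

/-- The generalized Petersen graph `GP(n, k)`: vertices are `Sum.inl i = u_i` (outer) and
`Sum.inr i = v_i` (inner) for `i : ZMod n`, with edges `u_i u_{i+1}`, `v_i v_{i+k}` and the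
spokes `u_i v_i`, indices taken modulo `n`. -/
def genPetersen (n k : ℕ) : SimpleGraph (ZMod n ⊕ ZMod n) :=
  SimpleGraph.fromRel (fun x y =>
    match x, y with
    | Sum.inl i, Sum.inl j => j = i + 1
    | Sum.inr i, Sum.inr j => j = i + (k : ZMod n)
    | Sum.inl i, Sum.inr j => i = j
    | Sum.inr _, Sum.inl _ => False)

/-- `c` is a star edge coloring of `G`: it is a proper edge coloring (distinct edges of `G`
sharing a vertex receive different colors) and no path with four edges and no cycle with
four edges is bicolored (i.e. colored with exactly two colors). -/
def IsStarEdgeColoring {V α : Type*} [DecidableEq α] (G : SimpleGraph V)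
    (c : Sym2 V → α) : Prop :=
  (∀ e₁ ∈ G.edgeSet, ∀ e₂ ∈ G.edgeSet, e₁ ≠ e₂ → (∃ v, v ∈ e₁ ∧ v ∈ e₂) → c e₁ ≠ c e₂) ∧
  (∀ (u v : V) (p : G.Walk u v), p.IsPath → p.length = 4 →
      (p.edges.map c).toFinset.card ≠ 2) ∧
  (∀ (u : V) (p : G.Walk u u), p.IsCycle → p.length = 4 →
      (p.edges.map c).toFinset.card ≠ 2)

namespace SimpleGraph

variable {V α : Type*} [DecidableEq α] {G : SimpleGraph V} {c : Sym2 V → α}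

lemma card_toFinset_ne_two_of_not_alternating {a b c d : α} (hab : a ≠ b) (hbc : b ≠ c)
    (hcd : c ≠ d) (h : a = c → b ≠ d) : [a, b, c, d].toFinset.card ≠ 2 := by
  have : 2 < [a, b, c, d].toFinset.card := by
    rw [Finset.two_lt_card]
    by_cases hac : a = c
    · subst hac
      exact ⟨a, by simp, b, by simp, d, by simp, hab, hcd, h rfl⟩
    · exact ⟨a, by simp, b, by simp, c, by simp, hab, hac, hbc⟩
  omega

lemma ne_of_sym2_ne {x y z : V} (h : s(x, y) ≠ s(y, z)) : x ≠ z :=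
  fun hxz => h (hxz ▸ Sym2.eq_swap)

lemma Walk.IsTrail.card_edgeColors_ne_two
    (hprop : ∀ x y z, G.Adj x y → G.Adj y z → x ≠ z → c s(x, y) ≠ c s(y, z))
    (halt : ∀ x₀ x₁ x₂ x₃ x₄, G.Adj x₀ x₁ → G.Adj x₁ x₂ → G.Adj x₂ x₃ → G.Adj x₃ x₄ →
      x₀ ≠ x₂ → x₁ ≠ x₃ → x₂ ≠ x₄ → c s(x₀, x₁) = c s(x₂, x₃) → c s(x₁, x₂) ≠ c s(x₃, x₄))
    {u v : V} {p : G.Walk u v} (hp : p.IsTrail) (hlen : p.length = 4) :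
    (p.edges.map c).toFinset.card ≠ 2 := by
  rcases p with _ | ⟨h₀₁, _ | ⟨h₁₂, _ | ⟨h₂₃, _ | ⟨h₃₄, _ | ⟨_, _⟩⟩⟩⟩⟩ <;> simp at hlen
  have hnd := hp.edges_nodup
  simp only [Walk.edges_cons, Walk.edges_nil, List.nodup_cons, List.mem_cons,
    List.not_mem_nil, or_false, not_or] at hnd
  obtain ⟨⟨h₀₂, -, -⟩, ⟨h₁₃, -⟩, h₂₄, -⟩ := hnd
  simp only [Walk.edges_cons, Walk.edges_nil, List.map_cons, List.map_nil]
  exact card_toFinset_ne_two_of_not_alternating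
    (hprop _ _ _ h₀₁ h₁₂ (ne_of_sym2_ne h₀₂)) (hprop _ _ _ h₁₂ h₂₃ (ne_of_sym2_ne h₁₃))
    (hprop _ _ _ h₂₃ h₃₄ (ne_of_sym2_ne h₂₄))
    (halt _ _ _ _ _ h₀₁ h₁₂ h₂₃ h₃₄ (ne_of_sym2_ne h₀₂) (ne_of_sym2_ne h₁₃) (ne_of_sym2_ne h₂₄))

theorem isStarEdgeColoring_of_forall_adj
    (hprop : ∀ x y z, G.Adj x y → G.Adj y z → x ≠ z → c s(x, y) ≠ c s(y, z))
    (halt : ∀ x₀ x₁ x₂ x₃ x₄, G.Adj x₀ x₁ → G.Adj x₁ x₂ → G.Adj x₂ x₃ → G.Adj x₃ x₄ →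
      x₀ ≠ x₂ → x₁ ≠ x₃ → x₂ ≠ x₄ → c s(x₀, x₁) = c s(x₂, x₃) → c s(x₁, x₂) ≠ c s(x₃, x₄)) :
    IsStarEdgeColoring G c := by
  refine ⟨fun e₁ he₁ e₂ he₂ hne ⟨v, hv₁, hv₂⟩ => ?_,
    fun _ _ p hp => hp.isTrail.card_edgeColors_ne_two hprop halt,
    fun _ p hp => hp.isTrail.card_edgeColors_ne_two hprop halt⟩
  obtain ⟨x, rfl⟩ := Sym2.mem_iff_exists.mp hv₁
  obtain ⟨z, rfl⟩ := Sym2.mem_iff_exists.mp hv₂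
  rw [Sym2.eq_swap]
  exact hprop x v z (G.adj_symm he₁) he₂ (fun hxz => hne (hxz ▸ rfl))

end SimpleGraph

section StarCycleColoring

variable {n : ℕ} {α : Type*}

def IsStarWindow (a b c d : α) : Prop := b ≠ a ∧ (a = c → b ≠ d)

/-- `f i` is the colour of the edge `{i, i + 1}` of the cycle `ZMod n`. -/
def IsStarCycleColoring (f : ZMod n → α) : Prop :=
  ∀ i, IsStarWindow (f i) (f (i + 1)) (f (i + 2)) (f (i + 3))

/-- The guards make this symmetric, as `Sym2.lift` requires; they only bite when `n ∣ 2`. -/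
def cycleEdgeColor [Zero α] (f : ZMod n → α) (i j : ZMod n) : α :=
  if j = i + 1 ∧ i ≠ j + 1 then f i else if i = j + 1 ∧ j ≠ i + 1 then f j else 0

lemma cycleEdgeColor_comm [Zero α] (f : ZMod n → α) (i j : ZMod n) :
    cycleEdgeColor f i j = cycleEdgeColor f j i := by
  unfold cycleEdgeColor
  split_ifs <;> first | rfl | tauto

variable [Zero α] {f : ZMod n → α}

lemma cycleEdgeColor_add_one (h2 : (2 : ZMod n) ≠ 0) (i : ZMod n) :
    cycleEdgeColor f i (i + 1) = f i := by
  have : i ≠ i + 1 + 1 := fun h => h2 (by linear_combination -h)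
  simp [cycleEdgeColor, this]

lemma cycleEdgeColor_add_one_left (h2 : (2 : ZMod n) ≠ 0) (i : ZMod n) :
    cycleEdgeColor f (i + 1) i = f i := by
  rw [cycleEdgeColor_comm, cycleEdgeColor_add_one h2]

lemma same_direction_of_ne {a b c : ZMod n} (hab : b = a + 1 ∨ a = b + 1)
    (hbc : c = b + 1 ∨ b = c + 1) (hac : a ≠ c) :
    (b = a + 1 ∧ c = b + 1) ∨ (a = b + 1 ∧ b = c + 1) := by
  rcases hab with hab | hab <;> rcases hbc with hbc | hbc
  · exact Or.inl ⟨hab, hbc⟩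
  · exact absurd (add_right_cancel (hab.symm.trans hbc)) hac
  · exact absurd (hab.trans hbc.symm) hac
  · exact Or.inr ⟨hab, hbc⟩

lemma eq_add_one_of_eq_add_one (h2 : (2 : ZMod n) ≠ 0) {a b c : ZMod n} (hab : b = a + 1)
    (hbc : c = b + 1 ∨ b = c + 1) (hac : a ≠ c) : c = b + 1 := by
  rcases same_direction_of_ne (Or.inl hab) hbc hac with ⟨-, h⟩ | ⟨h, -⟩
  · exact h
  · exact absurd (by linear_combination -hab - h) h2

lemma eq_add_one_of_eq_add_one' (h2 : (2 : ZMod n) ≠ 0) {a b c : ZMod n} (hab : a = b + 1)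
    (hbc : c = b + 1 ∨ b = c + 1) (hac : a ≠ c) : b = c + 1 := by
  rcases same_direction_of_ne (Or.inr hab) hbc hac with ⟨h, -⟩ | ⟨-, h⟩
  · exact absurd (by linear_combination -hab - h) h2
  · exact h

theorem IsStarCycleColoring.cycleEdgeColor_ne (hf : IsStarCycleColoring f)
    (h2 : (2 : ZMod n) ≠ 0) {a b c : ZMod n} (hab : b = a + 1 ∨ a = b + 1)
    (hbc : c = b + 1 ∨ b = c + 1) (hac : a ≠ c) :
    cycleEdgeColor f a b ≠ cycleEdgeColor f b c := by
  rcases same_direction_of_ne hab hbc hac with ⟨rfl, rfl⟩ | ⟨rfl, rfl⟩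
  · rw [cycleEdgeColor_add_one h2, cycleEdgeColor_add_one h2]
    exact (hf a).1.symm
  · rw [cycleEdgeColor_add_one_left h2, cycleEdgeColor_add_one_left h2]
    exact (hf c).1

theorem IsStarCycleColoring.not_alternating (hf : IsStarCycleColoring f)
    (h2 : (2 : ZMod n) ≠ 0) {a₀ a₁ a₂ a₃ a₄ : ZMod n} (h₀₁ : a₁ = a₀ + 1 ∨ a₀ = a₁ + 1)
    (h₁₂ : a₂ = a₁ + 1 ∨ a₁ = a₂ + 1) (h₂₃ : a₃ = a₂ + 1 ∨ a₂ = a₃ + 1)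
    (h₃₄ : a₄ = a₃ + 1 ∨ a₃ = a₄ + 1) (h₀₂ : a₀ ≠ a₂) (h₁₃ : a₁ ≠ a₃) (h₂₄ : a₂ ≠ a₄)
    (h : cycleEdgeColor f a₀ a₁ = cycleEdgeColor f a₂ a₃) :
    cycleEdgeColor f a₁ a₂ ≠ cycleEdgeColor f a₃ a₄ := by
  have e₂ (a : ZMod n) : a + 1 + 1 = a + 2 := by ring
  have e₃ (a : ZMod n) : a + 2 + 1 = a + 3 := by ring
  rcases h₀₁ with h₁ | h₁
  · have h₂ := eq_add_one_of_eq_add_one h2 h₁ h₁₂ h₀₂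
    have h₃ := eq_add_one_of_eq_add_one h2 h₂ h₂₃ h₁₃
    have h₄ := eq_add_one_of_eq_add_one h2 h₃ h₃₄ h₂₄
    subst h₄ h₃ h₂ h₁
    simp only [cycleEdgeColor_add_one h2] at h ⊢
    simp only [e₂, e₃] at h ⊢
    exact (hf a₀).2 h
  · have h₂ := eq_add_one_of_eq_add_one' h2 h₁ h₁₂ h₀₂
    have h₃ := eq_add_one_of_eq_add_one' h2 h₂ h₂₃ h₁₃
    have h₄ := eq_add_one_of_eq_add_one' h2 h₃ h₃₄ h₂₄
    subst h₁ h₂ h₃ h₄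
    simp only [cycleEdgeColor_add_one_left h2] at h ⊢
    simp only [e₂, e₃] at h ⊢
    exact fun h' => (hf a₄).2 h'.symm h.symm

end StarCycleColoring

section CycleWord

def cycleWord (n r : ℕ) : Fin 3 :=
  if n % 4 = 2 ∧ r + 2 = n then 1
  else if n % 4 = 2 ∧ r + 1 = n then 2
  else if r % 4 = 1 then 1
  else if r % 4 = 3 then 2
  else 0

def IsStarWindowAt (n r : ℕ) : Prop :=
  IsStarWindow (cycleWord n ((r + 0) % n)) (cycleWord n ((r + 1) % n))
    (cycleWord n ((r + 2) % n)) (cycleWord n ((r + 3) % n))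

lemma isStarWindowAt_four : ∀ r < 4, IsStarWindowAt 4 r := by
  unfold IsStarWindowAt IsStarWindow; decide

lemma isStarWindowAt_six : ∀ r < 6, IsStarWindowAt 6 r := by
  unfold IsStarWindowAt IsStarWindow; decide

lemma cycleWord_congr {n m x y : ℕ} (hxy : x % 4 = y % 4)
    (h₂ : n % 4 = 2 ∧ x + 2 = n ↔ m % 4 = 2 ∧ y + 2 = m)
    (h₁ : n % 4 = 2 ∧ x + 1 = n ↔ m % 4 = 2 ∧ y + 1 = m) :
    cycleWord n x = cycleWord m y := by
  unfold cycleWord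
  split_ifs <;> first | rfl | omega

lemma add_mod_eq_or {n r j : ℕ} (hr : r < n) (hj : j ≤ n) :
    (r + j) % n = r + j ∧ r + j < n ∨ (r + j) % n = r + j - n ∧ n ≤ r + j := by
  rcases lt_or_ge (r + j) n with h | h
  · exact Or.inl ⟨Nat.mod_eq_of_lt h, h⟩
  · refine Or.inr ⟨?_, h⟩
    rw [Nat.mod_eq_sub_mod h, Nat.mod_eq_of_lt (by omega)]

lemma IsStarWindowAt.of_eq {n m r s : ℕ} (h : IsStarWindowAt m s)
    (key : ∀ j ≤ 3, cycleWord n ((r + j) % n) = cycleWord m ((s + j) % m)) :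
    IsStarWindowAt n r := by
  unfold IsStarWindowAt at h ⊢
  rwa [key 0 (by norm_num), key 1 (by norm_num), key 2 (by norm_num), key 3 (by norm_num)]

/-- Away from its last two letters the word is `4`-periodic, so a window there reads like one of
the cycle of length `4`; near the end (when `n ≡ 2 [MOD 4]`) it reads like one of length `6`. -/
lemma isStarWindowAt {n r : ℕ} (hn : Even n) (h4 : 4 ≤ n) (hr : r < n) :
    IsStarWindowAt n r := by
  have := Nat.even_iff.mp hn
  rcases (show (n % 4 = 0 ∨ r + 6 ≤ n) ∨ (n % 4 = 2 ∧ n < r + 6) by omega) with h | h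
  · refine (isStarWindowAt_four (r % 4) (by omega)).of_eq fun j hj => ?_
    rcases add_mod_eq_or hr (show j ≤ n by omega) with ⟨hx, _⟩ | ⟨hx, _⟩ <;>
      rw [hx] <;> apply cycleWord_congr <;> omega
  · refine (isStarWindowAt_six (r + 6 - n) (by omega)).of_eq fun j hj => ?_
    rcases add_mod_eq_or hr (show j ≤ n by omega) with ⟨hx, _⟩ | ⟨hx, _⟩ <;>
      rcases add_mod_eq_or (show r + 6 - n < 6 by omega) (show j ≤ 6 by omega)
        with ⟨hy, _⟩ | ⟨hy, _⟩ <;>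
      rw [hx, hy] <;> apply cycleWord_congr <;> omega

theorem isStarCycleColoring_cycleWord {n : ℕ} (hn : Even n) (h4 : 4 ≤ n) :
    IsStarCycleColoring (fun i : ZMod n => cycleWord n i.val) := by
  have : NeZero n := ⟨by omega⟩
  intro i
  have hval (j : ℕ) : (i + j).val = (i.val + j) % n := by
    rw [ZMod.val_add, ZMod.val_natCast, Nat.add_mod_mod]
  have h := isStarWindowAt hn h4 (ZMod.val_lt i)
  unfold IsStarWindowAt at h
  simpa only [← hval, Nat.cast_zero, add_zero, Nat.cast_one, Nat.cast_ofNat,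
    Nat.mod_eq_of_lt (ZMod.val_lt i)] using h

end CycleWord

open Sum

section GenPetersen

variable {n k : ℕ}

lemma genPetersen_adj_inl_inl [Nontrivial (ZMod n)] {i j : ZMod n} :
    (genPetersen n k).Adj (inl i) (inl j) ↔ j = i + 1 ∨ i = j + 1 := by
  simp only [genPetersen, SimpleGraph.fromRel_adj, ne_eq, inl.injEq, and_iff_right_iff_imp]
  rintro (rfl | rfl) <;> simp

lemma genPetersen_adj_inl_inr {i j : ZMod n} : (genPetersen n k).Adj (inl i) (inr j) ↔ i = j := by
  simp [genPetersen]

lemma genPetersen_adj_inr_inl {i j : ZMod n} : (genPetersen n k).Adj (inr i) (inl j) ↔ i = j := by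
  simp [genPetersen, eq_comm]

lemma natCast_ne_zero_zmod_two_mul (hk : k ≠ 0) : (k : ZMod (2 * k)) ≠ 0 := by
  rw [Ne, ZMod.natCast_eq_zero_iff]
  exact fun h => by have := Nat.le_of_dvd (Nat.pos_of_ne_zero hk) h; omega

lemma natCast_add_self_zmod_two_mul : (k : ZMod (2 * k)) + k = 0 := by
  rw [← Nat.cast_add, ← two_mul, ZMod.natCast_self]

@[simp] lemma add_natCast_add_natCast_zmod_two_mul (i : ZMod (2 * k)) : i + k + k = i := by
  rw [add_assoc, natCast_add_self_zmod_two_mul, add_zero]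

lemma two_ne_zero_zmod_two_mul (hk : 2 ≤ k) : (2 : ZMod (2 * k)) ≠ 0 := by
  have : ((2 : ℕ) : ZMod (2 * k)) ≠ 0 := by
    rw [Ne, ZMod.natCast_eq_zero_iff]
    exact fun h => by have := Nat.le_of_dvd two_pos h; omega
  simpa using this

lemma genPetersen_adj_inr_inr (hk : k ≠ 0) {i j : ZMod (2 * k)} :
    (genPetersen (2 * k) k).Adj (inr i) (inr j) ↔ j = i + k := by
  have hk' := natCast_ne_zero_zmod_two_mul hk
  have hkk := natCast_add_self_zmod_two_mul (k := k)
  simp only [genPetersen, SimpleGraph.fromRel_adj, ne_eq, inr.injEq]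
  constructor
  · rintro ⟨-, h | h⟩
    · exact h
    · linear_combination -h - hkk
  · rintro rfl
    exact ⟨fun h => hk' (by linear_combination -h), Or.inl rfl⟩

end GenPetersen

section PetersenColor

variable {n : ℕ}

def petersenColor (f : ZMod n → Fin 3) : Sym2 (ZMod n ⊕ ZMod n) → Fin 5 :=
  Sym2.lift ⟨fun x y => match x, y with
    | inl i, inl j => Fin.castLE (by norm_num) (cycleEdgeColor f i j)
    | inr _, inr _ => 4
    | _, _ => 3, by rintro (i | i) (j | j) <;> simp [cycleEdgeColor_comm]⟩

section

variable (f : ZMod n → Fin 3) (i j : ZMod n)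

@[simp] lemma petersenColor_inl_inl :
    petersenColor f s(inl i, inl j) = Fin.castLE (by norm_num) (cycleEdgeColor f i j) := rfl

@[simp] lemma petersenColor_inl_inr : petersenColor f s(inl i, inr j) = 3 := rfl

@[simp] lemma petersenColor_inr_inl : petersenColor f s(inr i, inl j) = 3 := rfl

@[simp] lemma petersenColor_inr_inr : petersenColor f s(inr i, inr j) = 4 := rfl

end

@[simp] lemma castLE_ne_three (a : Fin 3) : Fin.castLE (by norm_num : 3 ≤ 5) a ≠ 3 := by
  simp [Fin.ext_iff]; omega

@[simp] lemma castLE_ne_four (a : Fin 3) : Fin.castLE (by norm_num : 3 ≤ 5) a ≠ 4 := by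
  simp [Fin.ext_iff]; omega

@[simp] lemma three_ne_castLE (a : Fin 3) : 3 ≠ Fin.castLE (by norm_num : 3 ≤ 5) a :=
  (castLE_ne_three a).symm

@[simp] lemma four_ne_castLE (a : Fin 3) : 4 ≠ Fin.castLE (by norm_num : 3 ≤ 5) a :=
  (castLE_ne_four a).symm

variable {k : ℕ} {f : ZMod (2 * k) → Fin 3}

lemma petersenColor_ne_of_adj (hk : 2 ≤ k) (hf : IsStarCycleColoring f)
    {x y z : ZMod (2 * k) ⊕ ZMod (2 * k)} (hxy : (genPetersen (2 * k) k).Adj x y)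
    (hyz : (genPetersen (2 * k) k).Adj y z) (hxz : x ≠ z) :
    petersenColor f s(x, y) ≠ petersenColor f s(y, z) := by
  have : Fact (1 < 2 * k) := ⟨by omega⟩
  rcases x with a | a <;> rcases y with b | b <;> rcases z with c | c <;>
    simp only [genPetersen_adj_inl_inl, genPetersen_adj_inl_inr, genPetersen_adj_inr_inl,
      genPetersen_adj_inr_inr (show k ≠ 0 by omega)] at hxy hyz <;>
    subst_vars <;> simp_all
  exact hf.cycleEdgeColor_ne (two_ne_zero_zmod_two_mul hk) hxy hyz hxz

lemma isLeft_eq_of_petersenColor_eq (hk : 2 ≤ k) {x₀ x₁ x₂ x₃ : ZMod (2 * k) ⊕ ZMod (2 * k)}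
    (h₀₁ : (genPetersen (2 * k) k).Adj x₀ x₁) (h₁₂ : (genPetersen (2 * k) k).Adj x₁ x₂)
    (h₂₃ : (genPetersen (2 * k) k).Adj x₂ x₃) (h₀₂ : x₀ ≠ x₂) (h₁₃ : x₁ ≠ x₃)
    (h : petersenColor f s(x₀, x₁) = petersenColor f s(x₂, x₃)) : x₁.isLeft = x₂.isLeft := by
  have : Fact (1 < 2 * k) := ⟨by omega⟩
  rcases x₀ with a₀ | a₀ <;> rcases x₁ with a₁ | a₁ <;> rcases x₂ with a₂ | a₂ <;>
    rcases x₃ with a₃ | a₃ <;>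
    simp only [genPetersen_adj_inl_inl, genPetersen_adj_inl_inr, genPetersen_adj_inr_inl,
      genPetersen_adj_inr_inr (show k ≠ 0 by omega)] at h₀₁ h₁₂ h₂₃ <;>
    subst_vars <;> simp_all

theorem petersenColor_not_alternating (hk : 2 ≤ k) (hf : IsStarCycleColoring f)
    {x₀ x₁ x₂ x₃ x₄ : ZMod (2 * k) ⊕ ZMod (2 * k)}
    (h₀₁ : (genPetersen (2 * k) k).Adj x₀ x₁) (h₁₂ : (genPetersen (2 * k) k).Adj x₁ x₂)
    (h₂₃ : (genPetersen (2 * k) k).Adj x₂ x₃) (h₃₄ : (genPetersen (2 * k) k).Adj x₃ x₄)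
    (h₀₂ : x₀ ≠ x₂) (h₁₃ : x₁ ≠ x₃) (h₂₄ : x₂ ≠ x₄)
    (h : petersenColor f s(x₀, x₁) = petersenColor f s(x₂, x₃)) :
    petersenColor f s(x₁, x₂) ≠ petersenColor f s(x₃, x₄) := by
  intro h'
  have s₁ := isLeft_eq_of_petersenColor_eq hk h₀₁ h₁₂ h₂₃ h₀₂ h₁₃ h
  have s₂ := isLeft_eq_of_petersenColor_eq hk h₁₂ h₂₃ h₃₄ h₁₃ h₂₄ h'
  have : Fact (1 < 2 * k) := ⟨by omega⟩
  rcases x₀ with a₀ | a₀ <;> rcases x₁ with a₁ | a₁ <;> rcases x₂ with a₂ | a₂ <;>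
    rcases x₃ with a₃ | a₃ <;> rcases x₄ with a₄ | a₄ <;>
    simp only [isLeft_inl, isLeft_inr, Bool.true_eq_false, Bool.false_eq_true] at s₁ s₂ <;>
    simp only [genPetersen_adj_inl_inl, genPetersen_adj_inl_inr, genPetersen_adj_inr_inl,
      genPetersen_adj_inr_inr (show k ≠ 0 by omega)] at h₀₁ h₁₂ h₂₃ h₃₄ <;>
    subst_vars <;> simp_all
  exact hf.not_alternating (two_ne_zero_zmod_two_mul hk) h₀₁ h₁₂ h₂₃ h₃₄ h₀₂ h₁₃ h₂₄ h h'

end PetersenColor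

theorem stmt_8 (k : ℕ) (hk : 2 ≤ k) :
    ∃ c : Sym2 (ZMod (2 * k) ⊕ ZMod (2 * k)) → Fin 5,
      IsStarEdgeColoring (genPetersen (2 * k) k) c := by
  have hf := isStarCycleColoring_cycleWord (n := 2 * k) (even_two_mul k) (by omega)
  exact ⟨petersenColor _, SimpleGraph.isStarEdgeColoring_of_forall_adj
    (fun _ _ _ => petersenColor_ne_of_adj hk hf)
    (fun _ _ _ _ _ => petersenColor_not_alternating hk hf)⟩
end
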